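/- For every antichain Γ in the poset Δ⁺ of positive roots of type A_n, the OY-number is invariant under duality: 𝒴(Γ*) = 𝒴(Γ). -/

import Mathlib

open Finset

/-- The root order on pairs: `(i,j) ≼ (i',j')` iff `i' ≤ i` and `j ≤ j'`. -/
def rle (p q : ℕ × ℕ) : Prop := q.1 ≤ p.1 ∧ p.2 ≤ q.2

instance : DecidableRel rle := fun p q =>
  inferInstanceAs (Decidable (q.1 ≤ p.1 ∧ p.2 ≤ q.2))

/-- The positive roots of type `A_n`, modelled as pairs `(i,j)` with `1 ≤ i ≤ j ≤ n`. -/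
def roots (n : ℕ) : Finset (ℕ × ℕ) :=
  ((Finset.Icc 1 n) ×ˢ (Finset.Icc 1 n)).filter (fun p => p.1 ≤ p.2)

/-- `Γ` is an antichain in `Δ⁺(A_n)`: a set of pairwise incomparable positive roots. -/
def IsAC (n : ℕ) (Γ : Finset (ℕ × ℕ)) : Prop :=
  Γ ⊆ roots n ∧ ∀ p ∈ Γ, ∀ q ∈ Γ, rle p q → p = q

/-- The upper ideal `I(Γ) = {x ∈ Δ⁺ : ∃ γ ∈ Γ, γ ≼ x}` generated by `Γ`. -/
def upIdeal (n : ℕ) (Γ : Finset (ℕ × ℕ)) : Finset (ℕ × ℕ) :=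
  (roots n).filter (fun x => ∃ γ ∈ Γ, rle γ x)

/-- The set of maximal elements of `S` with respect to the root order. -/
def maxOf (S : Finset (ℕ × ℕ)) : Finset (ℕ × ℕ) :=
  S.filter (fun x => ∀ y ∈ S, rle x y → y = x)

/-- The set of minimal elements of `S` with respect to the root order. -/
def minOf (S : Finset (ℕ × ℕ)) : Finset (ℕ × ℕ) :=
  S.filter (fun x => ∀ y ∈ S, rle y x → y = x)

/-- The reverse operator `𝔛`, sending an antichain `Γ` to the set of maximal
elements of `Δ⁺ \ I(Γ)`. -/
def Xrev (n : ℕ) (Γ : Finset (ℕ × ℕ)) : Finset (ℕ × ℕ) :=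
  maxOf (roots n \ upIdeal n Γ)

/-- `r_Γ(γ) = #(I(Γ) \ {γ})_min − #I(Γ)_min + 1`. -/
def rGam (n : ℕ) (Γ : Finset (ℕ × ℕ)) (γ : ℕ × ℕ) : ℤ :=
  ((minOf (upIdeal n Γ \ {γ})).card : ℤ) - ((minOf (upIdeal n Γ)).card : ℤ) + 1

/-- The OY-number `𝒴(Γ) = Σ_{γ ∈ Γ} r_Γ(γ)`; in particular `𝒴(∅) = 0`. -/
def OY (n : ℕ) (Γ : Finset (ℕ × ℕ)) : ℤ := ∑ γ ∈ Γ, rGam n Γ γ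

/-- The dual antichain `Γ*`: if `Γ` has first coordinates `𝐢` and second
coordinates `𝐣`, then `Γ*` pairs the elements of `[n] \ 𝐣` (listed increasingly,
as first coordinates) with the elements of `[n] \ 𝐢` (listed increasingly,
as second coordinates). -/
def dualAC (n : ℕ) (Γ : Finset (ℕ × ℕ)) : Finset (ℕ × ℕ) :=
  let iStar := ((Finset.Icc 1 n) \ (Γ.image Prod.snd)).sort (· ≤ ·)
  let jStar := ((Finset.Icc 1 n) \ (Γ.image Prod.fst)).sort (· ≤ ·)
  (Finset.range iStar.length).image (fun t => (iStar.getD t 0, jStar.getD t 0))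

/-!
Removing a minimal element `γ = (i, j)` from `I(Γ)` leaves `Γ \ {γ}` minimal and frees those
covers `(i - 1, j)`, `(i, j + 1)` of `γ` that lie above no other element of `Γ`, so `r_Γ(γ)` counts
the freed covers. For an antichain the left cover is freed iff `i - 1` is an ascent of `𝐢`
(`i - 1 ∉ 𝐢`, `i ∈ 𝐢`) and the right one iff `j` is a descent of `𝐣`; hence
`𝒴(Γ) = #ascents(𝐢) + #descents(𝐣)`. Complementing in `[n]` exchanges ascents and descents, and
`𝐢* = [n] \ 𝐣`, `𝐣* = [n] \ 𝐢`, so the two terms swap under duality. It remains that `Γ*` is again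
an antichain: `#{s | j_s < m} ≤ #{s | i_s < m}` for every `m`, which after complementing says that
the `t`-th element of `𝐢*` is at most the `t`-th element of `𝐣*`.
-/

lemma rle_refl (p : ℕ × ℕ) : rle p p := ⟨le_rfl, le_rfl⟩

lemma rle_trans {p q r : ℕ × ℕ} (hpq : rle p q) (hqr : rle q r) : rle p r :=
  ⟨hqr.1.trans hpq.1, hpq.2.trans hqr.2⟩

lemma rle_antisymm {p q : ℕ × ℕ} (hpq : rle p q) (hqp : rle q p) : p = q :=
  Prod.ext (le_antisymm hqp.1 hpq.1) (le_antisymm hpq.2 hqp.2)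

lemma mem_roots {n : ℕ} {p : ℕ × ℕ} : p ∈ roots n ↔ 1 ≤ p.1 ∧ p.1 ≤ p.2 ∧ p.2 ≤ n := by
  simp only [roots, mem_filter, mem_product, mem_Icc]
  omega

lemma mem_upIdeal {n : ℕ} {Γ : Finset (ℕ × ℕ)} {x : ℕ × ℕ} :
    x ∈ upIdeal n Γ ↔ x ∈ roots n ∧ ∃ γ ∈ Γ, rle γ x :=
  mem_filter

lemma mem_minOf {S : Finset (ℕ × ℕ)} {x : ℕ × ℕ} :
    x ∈ minOf S ↔ x ∈ S ∧ ∀ y ∈ S, rle y x → y = x :=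
  mem_filter

lemma mem_minOf_of_subset {S T : Finset (ℕ × ℕ)} {x : ℕ × ℕ} (hx : x ∈ minOf S) (hxT : x ∈ T)
    (hTS : T ⊆ S) : x ∈ minOf T :=
  mem_minOf.2 ⟨hxT, fun y hy => (mem_minOf.1 hx).2 y (hTS hy)⟩

section Antichain

variable {n : ℕ} {Γ : Finset (ℕ × ℕ)}

lemma IsAC.self_mem_upIdeal (hΓ : IsAC n Γ) {γ : ℕ × ℕ} (hγ : γ ∈ Γ) : γ ∈ upIdeal n Γ :=
  mem_upIdeal.2 ⟨hΓ.1 hγ, γ, hγ, rle_refl γ⟩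

lemma IsAC.snd_lt_of_fst_lt (hΓ : IsAC n Γ) {δ γ : ℕ × ℕ} (hδ : δ ∈ Γ) (hγ : γ ∈ Γ)
    (h : δ.1 < γ.1) : δ.2 < γ.2 := by
  by_contra! h'
  exact h.ne (congrArg Prod.fst (hΓ.2 γ hγ δ hδ ⟨h.le, h'⟩)).symm

lemma IsAC.fst_lt_of_snd_lt (hΓ : IsAC n Γ) {δ γ : ℕ × ℕ} (hδ : δ ∈ Γ) (hγ : γ ∈ Γ)
    (h : δ.2 < γ.2) : δ.1 < γ.1 := by
  by_contra! h'
  exact h.ne (congrArg Prod.snd (hΓ.2 δ hδ γ hγ ⟨h', h.le⟩))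

lemma IsAC.injOn_fst (hΓ : IsAC n Γ) : Set.InjOn Prod.fst (Γ : Set (ℕ × ℕ)) := by
  intro δ hδ γ hγ h
  rcases lt_trichotomy δ.2 γ.2 with h2 | h2 | h2
  · exact absurd h (hΓ.fst_lt_of_snd_lt hδ hγ h2).ne
  · exact Prod.ext h h2
  · exact absurd h (hΓ.fst_lt_of_snd_lt hγ hδ h2).ne'

lemma IsAC.injOn_snd (hΓ : IsAC n Γ) : Set.InjOn Prod.snd (Γ : Set (ℕ × ℕ)) := by
  intro δ hδ γ hγ h
  rcases lt_trichotomy δ.1 γ.1 with h1 | h1 | h1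
  · exact absurd h (hΓ.snd_lt_of_fst_lt hδ hγ h1).ne
  · exact Prod.ext h1 h
  · exact absurd h (hΓ.snd_lt_of_fst_lt hγ hδ h1).ne'

lemma IsAC.image_fst_subset (hΓ : IsAC n Γ) : Γ.image Prod.fst ⊆ Icc 1 n := by
  simp only [subset_iff, mem_image, mem_Icc]
  rintro _ ⟨γ, hγ, rfl⟩
  have := mem_roots.1 (hΓ.1 hγ)
  omega

lemma IsAC.image_snd_subset (hΓ : IsAC n Γ) : Γ.image Prod.snd ⊆ Icc 1 n := by
  simp only [subset_iff, mem_image, mem_Icc]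
  rintro _ ⟨γ, hγ, rfl⟩
  have := mem_roots.1 (hΓ.1 hγ)
  omega

lemma IsAC.minOf_upIdeal (hΓ : IsAC n Γ) : minOf (upIdeal n Γ) = Γ := by
  ext x
  refine ⟨fun hx => ?_, fun hx => mem_minOf.2 ⟨hΓ.self_mem_upIdeal hx, fun y hy hyx => ?_⟩⟩
  · obtain ⟨hxI, hmin⟩ := mem_minOf.1 hx
    obtain ⟨-, γ, hγ, hγx⟩ := mem_upIdeal.1 hxI
    exact hmin γ (hΓ.self_mem_upIdeal hγ) hγx ▸ hγ
  · obtain ⟨-, δ, hδ, hδy⟩ := mem_upIdeal.1 hy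
    obtain rfl := hΓ.2 δ hδ x hx (rle_trans hδy hyx)
    exact rle_antisymm hyx hδy

end Antichain

-- For `γ.1 = 0` the truncated `γ.1 - 1` makes the first entry `γ` itself.
def covers (γ : ℕ × ℕ) : Finset (ℕ × ℕ) := {(γ.1 - 1, γ.2), (γ.1, γ.2 + 1)}

section Covers

variable {n : ℕ} {γ c : ℕ × ℕ}

lemma rle_of_mem_covers (hc : c ∈ covers γ) : rle γ c := by
  simp only [covers, mem_insert, mem_singleton] at hc
  rcases hc with rfl | rfl <;> exact ⟨by simp, by simp⟩

lemma ne_of_mem_covers (hc : c ∈ covers γ) (hc' : c ∈ roots n) : c ≠ γ := by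
  simp only [covers, mem_insert, mem_singleton] at hc
  have := mem_roots.1 hc'
  rcases hc with rfl | rfl <;> simp only [ne_eq, Prod.ext_iff] <;> omega

lemma eq_or_eq_of_rle_of_mem_covers {y : ℕ × ℕ} (hc : c ∈ covers γ) (hγy : rle γ y)
    (hyc : rle y c) : y = γ ∨ y = c := by
  simp only [covers, mem_insert, mem_singleton] at hc
  obtain ⟨h1, h2⟩ := hγy
  obtain ⟨h3, h4⟩ := hyc
  rcases hc with rfl | rfl <;> simp only [Prod.ext_iff] at * <;> omega

lemma exists_mem_covers_rle {x : ℕ × ℕ} (hγ : γ ∈ roots n) (hx : x ∈ roots n) (hγx : rle γ x)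
    (hne : x ≠ γ) : ∃ c ∈ covers γ, c ∈ roots n ∧ rle c x := by
  obtain ⟨h1, h2⟩ := hγx
  have := mem_roots.1 hγ
  have := mem_roots.1 hx
  simp only [covers, mem_insert, mem_singleton, exists_eq_or_imp, exists_eq_left, mem_roots, rle]
  by_cases hlt : x.1 < γ.1
  · left; omega
  · right
    have : x.2 ≠ γ.2 := fun h => hne (Prod.ext (by omega) h)
    omega

end Covers

def freedCovers (n : ℕ) (Γ : Finset (ℕ × ℕ)) (γ : ℕ × ℕ) : Finset (ℕ × ℕ) :=
  (covers γ).filter (fun c => c ∈ roots n ∧ ∀ δ ∈ Γ, rle δ c → δ = γ)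

section RemoveMinimal

variable {n : ℕ} {Γ : Finset (ℕ × ℕ)} {γ : ℕ × ℕ}

lemma IsAC.mem_freedCovers_of_mem_minOf (hΓ : IsAC n Γ) (hγ : γ ∈ Γ) {x : ℕ × ℕ}
    (hx : x ∈ minOf (upIdeal n Γ \ {γ})) (hxΓ : x ∉ Γ) : x ∈ freedCovers n Γ γ := by
  obtain ⟨hxI, hmin⟩ := mem_minOf.1 hx
  obtain ⟨hxI, hxγ⟩ := mem_sdiff.1 hxI
  obtain ⟨hxR, δ, hδ, hδx⟩ := mem_upIdeal.1 hxI
  have honly : ∀ δ ∈ Γ, rle δ x → δ = γ := fun δ hδ hδx => by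
    by_contra hne
    have := hmin δ (mem_sdiff.2 ⟨hΓ.self_mem_upIdeal hδ, by simpa using hne⟩) hδx
    exact hxΓ (this ▸ hδ)
  obtain rfl := honly δ hδ hδx
  obtain ⟨c, hc, hcR, hcx⟩ :=
    exists_mem_covers_rle (hΓ.1 hγ) hxR hδx (by simpa using hxγ)
  have hcI : c ∈ upIdeal n Γ \ {δ} :=
    mem_sdiff.2 ⟨mem_upIdeal.2 ⟨hcR, δ, hγ, rle_of_mem_covers hc⟩,
      by simpa using ne_of_mem_covers hc hcR⟩
  obtain rfl := hmin c hcI hcx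
  exact mem_filter.2 ⟨hc, hcR, honly⟩

lemma IsAC.minOf_upIdeal_sdiff_singleton (hΓ : IsAC n Γ) (hγ : γ ∈ Γ) :
    minOf (upIdeal n Γ \ {γ}) = Γ.erase γ ∪ freedCovers n Γ γ := by
  ext x
  rw [mem_union, mem_erase]
  refine ⟨fun hx => ?_, ?_⟩
  · by_cases hxΓ : x ∈ Γ
    · exact Or.inl ⟨by simpa using (mem_sdiff.1 (mem_minOf.1 hx).1).2, hxΓ⟩
    · exact Or.inr (hΓ.mem_freedCovers_of_mem_minOf hγ hx hxΓ)
  rintro (⟨hxγ, hxΓ⟩ | hx)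
  · refine mem_minOf_of_subset (hΓ.minOf_upIdeal.symm ▸ hxΓ) ?_ sdiff_subset
    exact mem_sdiff.2 ⟨hΓ.self_mem_upIdeal hxΓ, by simpa using hxγ⟩
  obtain ⟨hc, hxR, honly⟩ := mem_filter.1 hx
  have hxγ := ne_of_mem_covers hc hxR
  refine mem_minOf.2 ⟨mem_sdiff.2 ⟨mem_upIdeal.2 ⟨hxR, γ, hγ, rle_of_mem_covers hc⟩,
    by simpa using hxγ⟩, fun y hy hyx => ?_⟩
  obtain ⟨hyI, hyγ⟩ := mem_sdiff.1 hy
  obtain ⟨-, δ, hδ, hδy⟩ := mem_upIdeal.1 hyI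
  obtain rfl := honly δ hδ (rle_trans hδy hyx)
  exact (eq_or_eq_of_rle_of_mem_covers hc hδy hyx).resolve_left (by simpa using hyγ)

lemma IsAC.rGam_eq_card_freedCovers (hΓ : IsAC n Γ) (hγ : γ ∈ Γ) :
    rGam n Γ γ = #(freedCovers n Γ γ) := by
  have hdisj : Disjoint (Γ.erase γ) (freedCovers n Γ γ) := by
    refine disjoint_left.2 fun c hcΓ hc => ?_
    obtain ⟨hcov, hcR, -⟩ := mem_filter.1 hc
    exact ne_of_mem_covers hcov hcR
      (hΓ.2 γ hγ c (mem_of_mem_erase hcΓ) (rle_of_mem_covers hcov)).symm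
  rw [rGam, hΓ.minOf_upIdeal, hΓ.minOf_upIdeal_sdiff_singleton hγ, card_union_of_disjoint hdisj,
    card_erase_of_mem hγ, Nat.cast_add, Nat.cast_sub (card_pos.2 ⟨γ, hγ⟩)]
  ring

end RemoveMinimal

def ascents (n : ℕ) (S : Finset ℕ) : Finset ℕ := (Ico 1 n).filter (fun i => i ∉ S ∧ i + 1 ∈ S)

def descents (n : ℕ) (S : Finset ℕ) : Finset ℕ := (Ico 1 n).filter (fun i => i ∈ S ∧ i + 1 ∉ S)

lemma ascents_sdiff (n : ℕ) (S : Finset ℕ) : ascents n (Icc 1 n \ S) = descents n S := by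
  ext i
  simp only [ascents, descents, mem_filter, mem_sdiff, mem_Icc, mem_Ico]
  constructor <;> rintro ⟨hi, h⟩ <;> refine ⟨hi, ?_⟩ <;> grind

lemma descents_sdiff (n : ℕ) (S : Finset ℕ) : descents n (Icc 1 n \ S) = ascents n S := by
  ext i
  simp only [ascents, descents, mem_filter, mem_sdiff, mem_Icc, mem_Ico]
  constructor <;> rintro ⟨hi, h⟩ <;> refine ⟨hi, ?_⟩ <;> grind

section OYFormula

variable {n : ℕ} {Γ : Finset (ℕ × ℕ)} {γ : ℕ × ℕ}

lemma IsAC.left_cover_free_iff (hΓ : IsAC n Γ) (hγ : γ ∈ Γ) :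
    ((γ.1 - 1, γ.2) ∈ roots n ∧ ∀ δ ∈ Γ, rle δ (γ.1 - 1, γ.2) → δ = γ) ↔
      γ.1 - 1 ∈ ascents n (Γ.image Prod.fst) := by
  have hγR := mem_roots.1 (hΓ.1 hγ)
  simp only [ascents, mem_filter, mem_Ico, mem_roots, mem_image, rle]
  constructor
  · rintro ⟨hR, honly⟩
    refine ⟨by omega, fun ⟨δ, hδ, hδ1⟩ => ?_, γ, hγ, by omega⟩
    have hδ2 := hΓ.snd_lt_of_fst_lt hδ hγ (by omega)
    have := congrArg Prod.fst (honly δ hδ ⟨by omega, hδ2.le⟩)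
    omega
  · rintro ⟨hi, hfree, -⟩
    refine ⟨by omega, fun δ hδ ⟨h1, h2⟩ => ?_⟩
    have : δ.1 ≠ γ.1 - 1 := fun h => hfree ⟨δ, hδ, h⟩
    exact hΓ.2 δ hδ γ hγ ⟨by omega, h2⟩

lemma IsAC.right_cover_free_iff (hΓ : IsAC n Γ) (hγ : γ ∈ Γ) :
    ((γ.1, γ.2 + 1) ∈ roots n ∧ ∀ δ ∈ Γ, rle δ (γ.1, γ.2 + 1) → δ = γ) ↔
      γ.2 ∈ descents n (Γ.image Prod.snd) := by
  have hγR := mem_roots.1 (hΓ.1 hγ)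
  simp only [descents, mem_filter, mem_Ico, mem_roots, mem_image, rle]
  constructor
  · rintro ⟨hR, honly⟩
    refine ⟨by omega, ⟨γ, hγ, rfl⟩, fun ⟨δ, hδ, hδ2⟩ => ?_⟩
    have hδ1 := hΓ.fst_lt_of_snd_lt hγ hδ (by omega)
    have := congrArg Prod.snd (honly δ hδ ⟨hδ1.le, by omega⟩)
    omega
  · rintro ⟨hi, -, hfree⟩
    refine ⟨by omega, fun δ hδ ⟨h1, h2⟩ => ?_⟩
    have : δ.2 ≠ γ.2 + 1 := fun h => hfree ⟨δ, hδ, h⟩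
    exact hΓ.2 δ hδ γ hγ ⟨h1, by omega⟩

lemma IsAC.rGam_eq (hΓ : IsAC n Γ) (hγ : γ ∈ Γ) :
    rGam n Γ γ = (if γ.1 - 1 ∈ ascents n (Γ.image Prod.fst) then 1 else 0) +
      (if γ.2 ∈ descents n (Γ.image Prod.snd) then 1 else 0) := by
  have hne : ((γ.1 - 1, γ.2) : ℕ × ℕ) ≠ (γ.1, γ.2 + 1) := by simp [Prod.ext_iff]
  rw [hΓ.rGam_eq_card_freedCovers hγ, freedCovers, card_filter, covers, sum_pair hne,
    if_congr (hΓ.left_cover_free_iff hγ) rfl rfl, if_congr (hΓ.right_cover_free_iff hγ) rfl rfl]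
  push_cast
  rfl

end OYFormula

lemma sum_boole_mem_eq_card {α β R : Type*} [DecidableEq β] [AddCommMonoidWithOne R]
    {s : Finset α} {t : Finset β} {f : α → β} (hf : Set.InjOn f s) (ht : t ⊆ s.image f) :
    ∑ x ∈ s, (if f x ∈ t then 1 else 0 : R) = #t := by
  rw [sum_boole, ← card_image_of_injOn (hf.mono (coe_subset.2 (filter_subset _ s)))]
  congr 2
  ext y
  simp only [mem_image, mem_filter]
  refine ⟨fun ⟨x, ⟨_, hx⟩, hxy⟩ => hxy ▸ hx, fun hy => ?_⟩
  obtain ⟨x, hx, rfl⟩ := mem_image.1 (ht hy)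
  exact ⟨x, ⟨hx, hy⟩, rfl⟩

lemma IsAC.OY_eq {n : ℕ} {Γ : Finset (ℕ × ℕ)} (hΓ : IsAC n Γ) :
    OY n Γ = #(ascents n (Γ.image Prod.fst)) + #(descents n (Γ.image Prod.snd)) := by
  have hinj : Set.InjOn (fun γ : ℕ × ℕ => γ.1 - 1) Γ := fun δ hδ γ hγ h => by
    have := mem_roots.1 (hΓ.1 hδ)
    have := mem_roots.1 (hΓ.1 hγ)
    exact hΓ.injOn_fst hδ hγ (by simp only at h; omega)
  have hasc : ascents n (Γ.image Prod.fst) ⊆ Γ.image (fun γ => γ.1 - 1) := by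
    intro i hi
    obtain ⟨hi, -, hP⟩ := mem_filter.1 hi
    obtain ⟨γ, hγ, hγi⟩ := mem_image.1 hP
    exact mem_image.2 ⟨γ, hγ, by omega⟩
  have hdesc : descents n (Γ.image Prod.snd) ⊆ Γ.image Prod.snd := fun i hi =>
    (mem_filter.1 hi).2.1
  rw [OY, sum_congr rfl fun γ hγ => hΓ.rGam_eq hγ, sum_add_distrib,
    sum_boole_mem_eq_card hinj hasc, sum_boole_mem_eq_card hΓ.injOn_snd hdesc]

section NthOfFinset

variable (A : Finset ℕ)

lemma Finset.sort_getD_eq_nth (t : ℕ) : (A.sort (· ≤ ·)).getD t 0 = Nat.nth (· ∈ A) t := by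
  rw [Nat.nth_eq_getD_sort (p := (· ∈ A)) A.finite_toSet]
  simp

lemma Finset.nth_mem {t : ℕ} (ht : t < #A) : Nat.nth (· ∈ A) t ∈ A :=
  Nat.nth_mem_of_lt_card (p := (· ∈ A)) A.finite_toSet (by simpa using ht)

lemma Finset.nth_strictMonoOn : StrictMonoOn (Nat.nth (· ∈ A)) (Set.Iio #A) := by
  simpa using Nat.nth_strictMonoOn (p := (· ∈ A)) A.finite_toSet

lemma Finset.image_nth_range : (range #A).image (Nat.nth (· ∈ A)) = A := by
  rw [← coe_inj, coe_image, coe_range]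
  simpa using Nat.image_nth_Iio_card (p := (· ∈ A)) A.finite_toSet

end NthOfFinset

lemma nth_le_nth_of_count_le {A B : Finset ℕ}
    (hcount : ∀ m, Nat.count (· ∈ B) m ≤ Nat.count (· ∈ A) m) {t : ℕ} (ht : t < #B) :
    Nat.nth (· ∈ A) t ≤ Nat.nth (· ∈ B) t := by
  have hB : Nat.count (· ∈ B) (Nat.nth (· ∈ B) t + 1) = t + 1 :=
    Nat.count_nth_succ fun hf => by simpa using ht
  have h := hcount (Nat.nth (· ∈ B) t + 1)
  rw [hB] at h
  exact Nat.lt_succ_iff.1 (Nat.nth_lt_of_lt_count h)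

lemma count_mem_sdiff {U S : Finset ℕ} (h : S ⊆ U) (m : ℕ) :
    Nat.count (· ∈ U \ S) m = Nat.count (· ∈ U) m - Nat.count (· ∈ S) m := by
  have hsplit : {x ∈ range m | x ∈ U \ S} = {x ∈ range m | x ∈ U} \ {x ∈ range m | x ∈ S} := by
    ext x
    simp only [mem_filter, mem_sdiff]
    tauto
  have hsub : {x ∈ range m | x ∈ S} ⊆ {x ∈ range m | x ∈ U} :=
    monotone_filter_right _ fun _ _ hx => h hx
  simp only [Nat.count_eq_card_filter_range, hsplit, card_sdiff_of_subset hsub]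

noncomputable def zipSorted (A B : Finset ℕ) : Finset (ℕ × ℕ) :=
  (range #A).image fun t => (Nat.nth (· ∈ A) t, Nat.nth (· ∈ B) t)

section ZipSorted

variable {A B : Finset ℕ}

lemma image_fst_zipSorted : (zipSorted A B).image Prod.fst = A := by
  rw [zipSorted, image_image]
  exact A.image_nth_range

lemma image_snd_zipSorted (hAB : #A = #B) : (zipSorted A B).image Prod.snd = B := by
  rw [zipSorted, image_image, hAB]
  exact B.image_nth_range

lemma isAC_zipSorted {n : ℕ} (hA : A ⊆ Icc 1 n) (hB : B ⊆ Icc 1 n) (hAB : #A = #B)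
    (hcount : ∀ m, Nat.count (· ∈ B) m ≤ Nat.count (· ∈ A) m) : IsAC n (zipSorted A B) := by
  simp only [IsAC, zipSorted, subset_iff, forall_mem_image, mem_range]
  refine ⟨fun t ht => ?_, fun s hs t ht hst => ?_⟩
  · have hAt := mem_Icc.1 (hA (A.nth_mem ht))
    have hBt := mem_Icc.1 (hB (B.nth_mem (hAB ▸ ht)))
    exact mem_roots.2 ⟨hAt.1, nth_le_nth_of_count_le hcount (hAB ▸ ht), hBt.2⟩
  · have hts : t ≤ s := (A.nth_strictMonoOn.le_iff_le ht hs).1 hst.1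
    have hst : s ≤ t := (B.nth_strictMonoOn.le_iff_le (hAB ▸ hs) (hAB ▸ ht)).1 hst.2
    rw [le_antisymm hst hts]

end ZipSorted

section Duality

variable {n : ℕ} {Γ : Finset (ℕ × ℕ)}

lemma dualAC_eq_zipSorted (n : ℕ) (Γ : Finset (ℕ × ℕ)) :
    dualAC n Γ = zipSorted (Icc 1 n \ Γ.image Prod.snd) (Icc 1 n \ Γ.image Prod.fst) := by
  simp only [dualAC, zipSorted, length_sort, sort_getD_eq_nth]

lemma IsAC.count_mem_image_snd_le (hΓ : IsAC n Γ) (m : ℕ) :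
    Nat.count (· ∈ Γ.image Prod.snd) m ≤ Nat.count (· ∈ Γ.image Prod.fst) m := by
  set Γm := Γ.filter (·.2 < m)
  simp only [Nat.count_eq_card_filter_range]
  calc #{b ∈ range m | b ∈ Γ.image Prod.snd}
      ≤ #(Γm.image Prod.snd) := card_le_card fun b hb => by
        simp only [mem_filter, mem_range, mem_image, Γm] at hb ⊢
        obtain ⟨hb, γ, hγ, rfl⟩ := hb
        exact ⟨γ, ⟨hγ, hb⟩, rfl⟩
    _ ≤ #Γm := card_image_le
    _ = #(Γm.image Prod.fst) := (card_image_of_injOn (hΓ.injOn_fst.mono (coe_subset.2 (filter_subset _ _)))).symm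
    _ ≤ #{a ∈ range m | a ∈ Γ.image Prod.fst} := card_le_card fun a ha => by
        simp only [mem_filter, mem_range, mem_image, Γm] at ha ⊢
        obtain ⟨γ, ⟨hγ, hγm⟩, rfl⟩ := ha
        exact ⟨(mem_roots.1 (hΓ.1 hγ)).2.1.trans_lt hγm, γ, hγ, rfl⟩

lemma IsAC.card_sdiff_image_snd (hΓ : IsAC n Γ) :
    #(Icc 1 n \ Γ.image Prod.snd) = #(Icc 1 n \ Γ.image Prod.fst) := by
  rw [card_sdiff_of_subset hΓ.image_snd_subset, card_sdiff_of_subset hΓ.image_fst_subset,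
    card_image_of_injOn hΓ.injOn_fst, card_image_of_injOn hΓ.injOn_snd]

lemma IsAC.dualAC (hΓ : IsAC n Γ) : IsAC n (dualAC n Γ) := by
  rw [dualAC_eq_zipSorted]
  refine isAC_zipSorted sdiff_subset sdiff_subset hΓ.card_sdiff_image_snd fun m => ?_
  rw [count_mem_sdiff hΓ.image_fst_subset, count_mem_sdiff hΓ.image_snd_subset]
  have := hΓ.count_mem_image_snd_le m
  have := Nat.count_mono_left (p := (· ∈ Γ.image Prod.fst)) (q := (· ∈ Icc 1 n)) (n := m) fun k _ hk => hΓ.image_fst_subset hk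
  omega

end Duality

theorem stmt14_general (n : ℕ) (Γ : Finset (ℕ × ℕ)) (hΓ : IsAC n Γ) :
    OY n (dualAC n Γ) = OY n Γ := by
  rw [hΓ.dualAC.OY_eq, hΓ.OY_eq, dualAC_eq_zipSorted, image_fst_zipSorted,
    image_snd_zipSorted hΓ.card_sdiff_image_snd, ascents_sdiff, descents_sdiff, add_comm]

/-- For every antichain `Γ` in `Δ⁺(A_n)`, the OY-number is invariant under
duality: `𝒴(Γ*) = 𝒴(Γ)`. -/
theorem stmt14 (n : ℕ) (hn : 1 ≤ n) (Γ : Finset (ℕ × ℕ)) (hΓ : IsAC n Γ) :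
    OY n (dualAC n Γ) = OY n Γ :=
  stmt14_general n Γ hΓ
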